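/- arXiv:2002.11372 — 4 statements merged into one kernel-verified Lean document; each statement's English description precedes it below -/
import Mathlib

section
/- For independent Bernoulli(p) random variables (ε_{i,j}), β > 0, and γ = β/(2Np), the expectation E[e^{-βH(σ)} · βH(τ)] equals -E[e^{-βH(σ)}] · Σ_{k,l=1}^N (β/(2N)) τ_k τ_l e^{γ σ_k σ_l} / (1 - p + p e^{γ σ_k σ_l}), for all σ, τ ∈ {-1,+1}^N. -/
/-!
Since `-βH(σ) = ∑_{k,l} γ σ_k σ_l ε_{k,l}` is linear in the independent Bernoulli variables,
`exp (-βH(σ))` is a product of independent factors `exp (a ε_{k,l})` with `a = γ σ_k σ_l`.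
Multiplying by `ε_{k,l}` changes only that factor, whose expectation goes from `1 - p + p e^a`
to `p e^a`; expanding `βH(τ) = -∑_{k,l} γ τ_k τ_l ε_{k,l}` and using `γ p = β / (2N)` gives the
formula.
-/

open MeasureTheory ProbabilityTheory Finset

section

variable {Ω : Type*} [MeasurableSpace Ω] {μ : Measure Ω}

lemma integrable_comp_of_ae_mem_finite {E F : Type*} [MeasurableSpace E] [NormedAddCommGroup F]
    [IsFiniteMeasure μ] {X : Ω → E} {S : Set E} (hS : S.Finite) (hX : AEMeasurable X μ)
    (hXS : ∀ᵐ ω ∂μ, X ω ∈ S) {Φ : E → F} (hΦ : StronglyMeasurable Φ) :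
    Integrable (fun ω => Φ (X ω)) μ := by
  obtain ⟨C, hC⟩ := (hS.image (‖Φ ·‖)).bddAbove
  refine .of_bound (hΦ.aestronglyMeasurable.comp_aemeasurable hX) C ?_
  filter_upwards [hXS] with ω hω using hC (Set.mem_image_of_mem _ hω)

lemma integral_comp_of_ae_eq_zero_or_one [IsProbabilityMeasure μ] {X : Ω → ℝ}
    (hX : AEMeasurable X μ) (h01 : ∀ᵐ ω ∂μ, X ω = 0 ∨ X ω = 1) (g : ℝ → ℝ) :
    ∫ ω, g (X ω) ∂μ = (1 - ∫ ω, X ω ∂μ) * g 0 + (∫ ω, X ω ∂μ) * g 1 := by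
  have hlin : (fun ω => g (X ω)) =ᵐ[μ] fun ω => g 0 + (g 1 - g 0) * X ω := by
    filter_upwards [h01] with ω hω
    rcases hω with h | h <;> simp [h]
  have hXint : Integrable X μ :=
    integrable_comp_of_ae_mem_finite (S := {0, 1}) (by simp) hX h01 stronglyMeasurable_id
  rw [integral_congr_ae hlin, integral_add (integrable_const _) (hXint.const_mul _),
    integral_const_mul, integral_const, probReal_univ, one_smul]
  ring

namespace ProbabilityTheory.iIndepFun

variable {ι 𝓧 : Type*} [Fintype ι] [DecidableEq ι] [MeasurableSpace 𝓧] {X : ι → Ω → 𝓧}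
  {f : ι → 𝓧 → ℝ} {g : 𝓧 → ℝ}

lemma integral_prod_comp_mul_comp (hX : iIndepFun X μ) (mX : ∀ i, Measurable (X i))
    (hf : ∀ i, Measurable (f i)) (hg : Measurable g) (j : ι) :
    ∫ ω, (∏ i, f i (X i ω)) * g (X j ω) ∂μ
      = (∫ ω, f j (X j ω) * g (X j ω) ∂μ) * ∏ i ∈ univ.erase j, ∫ ω, f i (X i ω) ∂μ := by
  set f' : ι → 𝓧 → ℝ := fun i x => if i = j then f j x * g x else f i x
  have h_erase : ∀ ω, ∏ i ∈ univ.erase j, f' i (X i ω) = ∏ i ∈ univ.erase j, f i (X i ω) :=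
    fun ω => prod_congr rfl fun i hi => if_neg (ne_of_mem_erase hi)
  have hprod : ∀ ω, (∏ i, f i (X i ω)) * g (X j ω) = ∏ i, f' i (X i ω) := fun ω => by
    rw [← mul_prod_erase _ _ (mem_univ j), ← mul_prod_erase _ (fun i => f' i (X i ω)) (mem_univ j),
      h_erase]
    simp only [f', if_pos]
    ring
  have hf'm : ∀ i, Measurable (f' i) := fun i => by
    simp only [f']
    split_ifs
    exacts [(hf j).mul hg, hf i]
  simp_rw [hprod]
  rw [hX.integral_fun_prod_comp (fun i => (mX i).aemeasurable)
      (fun i => (hf'm i).aestronglyMeasurable), ← mul_prod_erase _ _ (mem_univ j)]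
  congr 1
  · simp [f']
  · exact prod_congr rfl fun i hi => by simp [f', ne_of_mem_erase hi]

lemma integral_prod_comp_mul_comp_eq_div (hX : iIndepFun X μ) (mX : ∀ i, Measurable (X i))
    (hf : ∀ i, Measurable (f i)) (hg : Measurable g) {j : ι}
    (hj : ∫ ω, f j (X j ω) ∂μ ≠ 0) :
    ∫ ω, (∏ i, f i (X i ω)) * g (X j ω) ∂μ
      = (∫ ω, ∏ i, f i (X i ω) ∂μ) * (∫ ω, f j (X j ω) * g (X j ω) ∂μ) / ∫ ω, f j (X j ω) ∂μ := by
  rw [hX.integral_prod_comp_mul_comp mX hf hg, hX.integral_fun_prod_comp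
      (fun i => (mX i).aemeasurable) (fun i => (hf i).aestronglyMeasurable),
    ← mul_prod_erase _ _ (mem_univ j)]
  field_simp

end ProbabilityTheory.iIndepFun

section BernoulliFamily

variable [IsProbabilityMeasure μ] {ι : Type*} [Fintype ι] {ε : ι → Ω → ℝ}

lemma integrable_exp_sum_mul (hε : ∀ i, Measurable (ε i))
    (h01 : ∀ i, ∀ᵐ ω ∂μ, ε i ω = 0 ∨ ε i ω = 1) (a : ι → ℝ) (j : ι) :
    Integrable (fun ω => Real.exp (∑ i, a i * ε i ω) * ε j ω) μ :=
  integrable_comp_of_ae_mem_finite (X := fun ω i => ε i ω)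
    (Set.Finite.pi' fun _ => Set.toFinite {0, 1}) (measurable_pi_lambda _ hε).aemeasurable
    (ae_all_iff.mpr h01) (Φ := fun x => Real.exp (∑ i, a i * x i) * x j)
    (by fun_prop : Measurable _).stronglyMeasurable

lemma integral_exp_sum_mul (hindep : iIndepFun ε μ) (hε : ∀ i, Measurable (ε i))
    (h01 : ∀ i, ∀ᵐ ω ∂μ, ε i ω = 0 ∨ ε i ω = 1) (a : ι → ℝ) (j : ι) :
    ∫ ω, Real.exp (∑ i, a i * ε i ω) * ε j ω ∂μ
      = (∫ ω, Real.exp (∑ i, a i * ε i ω) ∂μ) *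
          ((∫ ω, ε j ω ∂μ) * Real.exp (a j)
            / (1 - ∫ ω, ε j ω ∂μ + (∫ ω, ε j ω ∂μ) * Real.exp (a j))) := by
  classical
  have hmgf : ∫ ω, Real.exp (a j * ε j ω) ∂μ
      = 1 - ∫ ω, ε j ω ∂μ + (∫ ω, ε j ω ∂μ) * Real.exp (a j) := by
    rw [integral_comp_of_ae_eq_zero_or_one (hε j).aemeasurable (h01 j)
      (fun x => Real.exp (a j * x))]
    simp
  have hmgf_pos : 0 < ∫ ω, Real.exp (a j * ε j ω) ∂μ :=
    integral_exp_pos (integrable_comp_of_ae_mem_finite (Set.toFinite {0, 1})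
      (hε j).aemeasurable (h01 j) (Φ := fun x => Real.exp (a j * x))
      (by fun_prop : Measurable _).stronglyMeasurable)
  have hsplit := hindep.integral_prod_comp_mul_comp_eq_div (f := fun i x => Real.exp (a i * x))
    (g := id) hε (fun i => by fun_prop) measurable_id hmgf_pos.ne'
  simp only [id] at hsplit
  simp_rw [Real.exp_sum]
  rw [hsplit, hmgf, integral_comp_of_ae_eq_zero_or_one (hε j).aemeasurable (h01 j)
    (fun x => Real.exp (a j * x) * x)]
  simp only [mul_zero, mul_one]
  ring

lemma integral_exp_sum_mul_sum (hindep : iIndepFun ε μ) (hε : ∀ i, Measurable (ε i))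
    (h01 : ∀ i, ∀ᵐ ω ∂μ, ε i ω = 0 ∨ ε i ω = 1) (a c : ι → ℝ) :
    ∫ ω, Real.exp (∑ i, a i * ε i ω) * ∑ j, c j * ε j ω ∂μ
      = (∫ ω, Real.exp (∑ i, a i * ε i ω) ∂μ) * ∑ j, c j *
          ((∫ ω, ε j ω ∂μ) * Real.exp (a j)
            / (1 - ∫ ω, ε j ω ∂μ + (∫ ω, ε j ω ∂μ) * Real.exp (a j))) := by
  simp_rw [mul_sum, mul_left_comm _ (c _)]
  rw [integral_finsetSum _ fun j _ => (integrable_exp_sum_mul hε h01 a j).const_mul (c j)]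
  refine sum_congr rfl fun j _ => ?_
  rw [integral_const_mul, integral_exp_sum_mul hindep hε h01]

end BernoulliFamily

end

theorem expectation_exp_hamiltonian_mul_hamiltonian_general
    {Ω : Type*} [MeasureSpace Ω] [IsProbabilityMeasure (ℙ : Measure Ω)]
    (N : ℕ) (p : ℝ) (hp : 0 < p) (β : ℝ)
    (γ : ℝ) (hγ : γ = β / (2 * N * p))
    (ε : Fin N × Fin N → Ω → ℝ)
    (hmeas : ∀ k, Measurable (ε k))
    (hval : ∀ k, ∀ᵐ ω ∂ℙ, ε k ω = 0 ∨ ε k ω = 1)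
    (hmean : ∀ k, ∫ ω, ε k ω ∂ℙ = p)
    (hindep : iIndepFun ε ℙ)
    (σ τ : Fin N → ℝ)
    (H : (Fin N → ℝ) → Ω → ℝ)
    (hH : ∀ ρ ω, H ρ ω = -(1 / (2 * N * p)) * ∑ i : Fin N, ∑ j : Fin N, ρ i * ρ j * ε (i, j) ω) :
    ∫ ω, Real.exp (-β * H σ ω) * (β * H τ ω) ∂ℙ
      = -(∫ ω, Real.exp (-β * H σ ω) ∂ℙ) *
          ∑ k : Fin N, ∑ l : Fin N,
            (β / (2 * N)) * τ k * τ l * Real.exp (γ * σ k * σ l)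
              / (1 - p + p * Real.exp (γ * σ k * σ l)) := by
  have hβH : ∀ ρ ω, β * H ρ ω = -∑ m : Fin N × Fin N, γ * ρ m.1 * ρ m.2 * ε m ω := by
    intro ρ ω
    simp only [hH, hγ, Fintype.sum_prod_type, mul_sum, ← sum_neg_distrib]
    exact sum_congr rfl fun i _ => sum_congr rfl fun j _ => by ring
  have hβHσ : ∀ ω, -β * H σ ω = ∑ m : Fin N × Fin N, γ * σ m.1 * σ m.2 * ε m ω := fun ω => by
    rw [neg_mul, hβH, neg_neg]
  have hγp : γ * p = β / (2 * N) := by rw [hγ]; field_simp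
  simp_rw [hβHσ, hβH, mul_neg, integral_neg]
  rw [integral_exp_sum_mul_sum hindep hmeas hval]
  simp_rw [hmean]
  rw [Fintype.sum_prod_type, neg_mul, neg_inj]
  congr 1
  refine sum_congr rfl fun k _ => sum_congr rfl fun l _ => ?_
  rw [← hγp]
  ring

theorem expectation_exp_hamiltonian_mul_hamiltonian
    {Ω : Type*} [MeasureSpace Ω] [IsProbabilityMeasure (ℙ : Measure Ω)]
    (N : ℕ) (hN : 0 < N) (p : ℝ) (hp : 0 < p) (hp1 : p ≤ 1) (β : ℝ) (hβ : 0 < β)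
    (γ : ℝ) (hγ : γ = β / (2 * N * p))
    (ε : Fin N × Fin N → Ω → ℝ)
    (hmeas : ∀ k, Measurable (ε k))
    (hval : ∀ k, ∀ᵐ ω ∂ℙ, ε k ω = 0 ∨ ε k ω = 1)
    (hmean : ∀ k, ∫ ω, ε k ω ∂ℙ = p)
    (hindep : iIndepFun ε ℙ)
    (σ τ : Fin N → ℝ) (hσ : ∀ i, σ i = 1 ∨ σ i = -1) (hτ : ∀ i, τ i = 1 ∨ τ i = -1)
    (H : (Fin N → ℝ) → Ω → ℝ)
    (hH : ∀ ρ ω, H ρ ω = -(1 / (2 * N * p)) * ∑ i : Fin N, ∑ j : Fin N, ρ i * ρ j * ε (i, j) ω) :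
    ∫ ω, Real.exp (-β * H σ ω) * (β * H τ ω) ∂ℙ
      = -(∫ ω, Real.exp (-β * H σ ω) ∂ℙ) *
          ∑ k : Fin N, ∑ l : Fin N,
            (β / (2 * N)) * τ k * τ l * Real.exp (γ * σ k * σ l)
              / (1 - p + p * Real.exp (γ * σ k * σ l)) :=
  expectation_exp_hamiltonian_mul_hamiltonian_general N p hp β γ hγ ε hmeas hval hmean hindep σ τ H
    hH
end

section
/- For independent Bernoulli(p) random variables (ε_{i,j}), β > 0, and γ = β/(2Np), the covariance Cov(e^{-βH(σ)}, βH(τ)) equals -E[e^{-βH(σ)}] · (β/(2N)) · Σ_{k,l=1}^N τ_k τ_l · ( e^{γ σ_k σ_l}/(1-p+p e^{γ σ_k σ_l}) - 1 ), for all σ, τ ∈ {-1,+1}^N. -/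
/-!
Write `a_{kl} = γ σ_k σ_l`. Then `e^{-βH(σ)} = ∏_{k,l} e^{a_{kl} ε_{kl}}` and
`βH(τ) = -γ ∑_{k,l} τ_k τ_l ε_{kl}`, so by bilinearity the covariance is
`-γ ∑ τ_k τ_l Cov(P, ε_{kl})` with `P = e^{-βH(σ)}`. Splitting off the factor
`e^{a ε}` of `P` belonging to `ε = ε_{kl}`, independence gives
`E[P ε] · E[e^{a ε}] = E[P] · E[e^{a ε} ε]`, and for a Bernoulli(p) variable
`E[e^{a ε}] = 1 - p + p e^a`, `E[e^{a ε} ε] = p e^a`. Hence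
`Cov(P, ε) = E[P] p (e^a / (1 - p + p e^a) - 1)`, and `γ p = β / (2N)`.
-/

open MeasureTheory ProbabilityTheory Real Finset

section

variable {Ω ι : Type*} [MeasurableSpace Ω] {μ : Measure Ω}

section ZeroOne

variable {X : Ω → ℝ}

theorem abs_le_one_of_eq_zero_or_one {x : ℝ} (h : x = 0 ∨ x = 1) : |x| ≤ 1 := by
  rcases h with rfl | rfl <;> simp

theorem integrable_of_ae_zero_or_one [IsFiniteMeasure μ] (hX : AEStronglyMeasurable X μ)
    (h01 : ∀ᵐ ω ∂μ, X ω = 0 ∨ X ω = 1) : Integrable X μ :=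
  .of_bound hX 1 (h01.mono fun _ => abs_le_one_of_eq_zero_or_one)

theorem integral_comp_of_ae_zero_or_one [IsProbabilityMeasure μ] (hX : AEStronglyMeasurable X μ)
    (h01 : ∀ᵐ ω ∂μ, X ω = 0 ∨ X ω = 1) (φ : ℝ → ℝ) :
    ∫ ω, φ (X ω) ∂μ = φ 0 + (φ 1 - φ 0) * ∫ ω, X ω ∂μ := by
  have hlin : (fun ω => φ (X ω)) =ᵐ[μ] fun ω => φ 0 + (φ 1 - φ 0) * X ω := by
    filter_upwards [h01] with ω hω
    rcases hω with h | h <;> simp [h]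
  rw [integral_congr_ae hlin,
    integral_add (integrable_const _) ((integrable_of_ae_zero_or_one hX h01).const_mul _),
    integral_const_mul, integral_const, probReal_univ, one_smul]

end ZeroOne

theorem integral_mul_sum_sub_mul_integral_sum {Z : Ω → ℝ} {X : ι → Ω → ℝ} (s : Finset ι)
    (c : ι → ℝ) (hZX : ∀ k, Integrable (fun ω => Z ω * X k ω) μ) (hX : ∀ k, Integrable (X k) μ) :
    ∫ ω, Z ω * ∑ k ∈ s, c k * X k ω ∂μ - (∫ ω, Z ω ∂μ) * ∫ ω, ∑ k ∈ s, c k * X k ω ∂μ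
      = ∑ k ∈ s, c k * (∫ ω, Z ω * X k ω ∂μ - (∫ ω, Z ω ∂μ) * ∫ ω, X k ω ∂μ) := by
  simp only [mul_sum, mul_left_comm (Z _)]
  rw [integral_finsetSum _ fun k _ => (hZX k).const_mul _,
    integral_finsetSum _ fun k _ => (hX k).const_mul _, mul_sum, ← sum_sub_distrib]
  exact sum_congr rfl fun k _ => by rw [integral_const_mul, integral_const_mul]; ring

section Independent

variable [Fintype ι] {ε : ι → Ω → ℝ}

theorem ProbabilityTheory.iIndepFun.integral_prod_erase_mul_comp [DecidableEq ι]
    (hindep : iIndepFun ε μ)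
    (hmeas : ∀ j, Measurable (ε j)) {f : ι → ℝ → ℝ} (hf : ∀ j, Measurable (f j)) (k : ι)
    {g : ℝ → ℝ} (hg : Measurable g) :
    ∫ ω, (∏ j ∈ univ.erase k, f j (ε j ω)) * g (ε k ω) ∂μ
      = (∫ ω, ∏ j ∈ univ.erase k, f j (ε j ω) ∂μ) * ∫ ω, g (ε k ω) ∂μ := by
  set F := Function.update f k g
  have hF : ∀ j, Measurable (F j ∘ ε j) := fun j => by
    rcases eq_or_ne j k with rfl | hjk
    · simpa [F] using hg.comp (hmeas j)
    · simpa [F, hjk] using (hf j).comp (hmeas j)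
  have hind := (hindep.comp F fun j => by
    rcases eq_or_ne j k with rfl | hjk <;> simp [F, *]).indepFun_finsetProd_of_notMem hF
    (notMem_erase k univ)
  have hprod : ∏ j ∈ univ.erase k, F j ∘ ε j = fun ω => ∏ j ∈ univ.erase k, f j (ε j ω) := by
    ext ω
    rw [prod_apply]
    exact prod_congr rfl fun j hj => by simp [F, ne_of_mem_erase hj]
  rw [hprod, show F k = g from Function.update_self ..] at hind
  exact hind.integral_mul_eq_mul_integral
    (Finset.measurable_prod _ fun j _ => (hf j).comp (hmeas j)).aestronglyMeasurable
    (hg.comp (hmeas k)).aestronglyMeasurable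

theorem ProbabilityTheory.iIndepFun.integral_prod_mul_comp_mul_integral [DecidableEq ι]
    (hindep : iIndepFun ε μ)
    (hmeas : ∀ j, Measurable (ε j)) {f : ι → ℝ → ℝ} (hf : ∀ j, Measurable (f j)) (k : ι)
    {g : ℝ → ℝ} (hg : Measurable g) :
    (∫ ω, (∏ j, f j (ε j ω)) * g (ε k ω) ∂μ) * ∫ ω, f k (ε k ω) ∂μ
      = (∫ ω, ∏ j, f j (ε j ω) ∂μ) * ∫ ω, f k (ε k ω) * g (ε k ω) ∂μ := by
  have hsplit : ∀ ω, ∏ j, f j (ε j ω) = (∏ j ∈ univ.erase k, f j (ε j ω)) * f k (ε k ω) :=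
    fun ω => (prod_erase_mul _ _ (mem_univ k)).symm
  simp only [hsplit, mul_assoc]
  rw [hindep.integral_prod_erase_mul_comp hmeas hf k (g := fun x => f k x * g x) ((hf k).mul hg),
    hindep.integral_prod_erase_mul_comp hmeas hf k (hf k)]
  ring

theorem integrable_prod_exp_mul_mul [IsFiniteMeasure μ] (hmeas : ∀ j, Measurable (ε j))
    (h01 : ∀ j, ∀ᵐ ω ∂μ, ε j ω = 0 ∨ ε j ω = 1) (a : ι → ℝ) (k : ι) :
    Integrable (fun ω => (∏ j, exp (a j * ε j ω)) * ε k ω) μ := by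
  refine .of_bound (by fun_prop) ((∏ j, exp |a j|) * 1) ?_
  filter_upwards [ae_all_iff.2 h01] with ω hω
  have hexp_le : ∀ j, ‖exp (a j * ε j ω)‖ ≤ exp |a j| := fun j => by
    rw [norm_of_nonneg (exp_nonneg _), exp_le_exp]
    calc a j * ε j ω ≤ |a j| * |ε j ω| := abs_mul (a j) (ε j ω) ▸ le_abs_self _
      _ ≤ |a j| := mul_le_of_le_one_right (abs_nonneg _) (abs_le_one_of_eq_zero_or_one (hω j))
  rw [norm_mul, norm_prod]
  exact mul_le_mul (prod_le_prod (fun _ _ => norm_nonneg _) fun j _ => hexp_le j)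
    (abs_le_one_of_eq_zero_or_one (hω k)) (norm_nonneg _) (by positivity)

theorem ProbabilityTheory.iIndepFun.integral_prod_exp_mul_mul_sub_mul_integral
    [IsProbabilityMeasure μ] [DecidableEq ι] (hindep : iIndepFun ε μ)
    (hmeas : ∀ j, Measurable (ε j)) (h01 : ∀ j, ∀ᵐ ω ∂μ, ε j ω = 0 ∨ ε j ω = 1) (a : ι → ℝ)
    (k : ι) {p : ℝ} (hp0 : 0 ≤ p) (hp1 : p ≤ 1) (hmean : ∫ ω, ε k ω ∂μ = p) :
    ∫ ω, (∏ j, exp (a j * ε j ω)) * ε k ω ∂μ - (∫ ω, ∏ j, exp (a j * ε j ω) ∂μ) * p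
      = (∫ ω, ∏ j, exp (a j * ε j ω) ∂μ) * p * (exp (a k) / (1 - p + p * exp (a k)) - 1) := by
  have hD : 0 < 1 - p + p * exp (a k) := by
    rcases hp1.lt_or_eq with hlt | rfl
    · nlinarith [exp_pos (a k)]
    · simpa using exp_pos (a k)
  have h := hindep.integral_prod_mul_comp_mul_integral hmeas (f := fun j x => exp (a j * x))
    (fun j => by fun_prop) k measurable_id
  rw [integral_comp_of_ae_zero_or_one (hmeas k).aestronglyMeasurable (h01 k)
      (fun x => exp (a k * x)),
    integral_comp_of_ae_zero_or_one (hmeas k).aestronglyMeasurable (h01 k)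
      (fun x => exp (a k * x) * id x), hmean] at h
  simp only [mul_zero, exp_zero, mul_one, id] at h
  field_simp
  linear_combination h

end Independent

end

theorem covariance_exp_hamiltonian_hamiltonian_general
    {Ω : Type*} [MeasureSpace Ω] [IsProbabilityMeasure (ℙ : Measure Ω)]
    (N : ℕ) (p : ℝ) (hp : 0 < p) (hp1 : p ≤ 1) (β : ℝ)
    (γ : ℝ) (hγ : γ = β / (2 * N * p))
    (ε : Fin N × Fin N → Ω → ℝ)
    (hmeas : ∀ k, Measurable (ε k))
    (hval : ∀ k, ∀ᵐ ω ∂ℙ, ε k ω = 0 ∨ ε k ω = 1)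
    (hmean : ∀ k, ∫ ω, ε k ω ∂ℙ = p)
    (hindep : iIndepFun ε ℙ)
    (σ τ : Fin N → ℝ)
    (H : (Fin N → ℝ) → Ω → ℝ)
    (hH : ∀ ρ ω, H ρ ω = -(1 / (2 * N * p)) * ∑ i : Fin N, ∑ j : Fin N, ρ i * ρ j * ε (i, j) ω) :
    (∫ ω, Real.exp (-β * H σ ω) * (β * H τ ω) ∂ℙ)
        - (∫ ω, Real.exp (-β * H σ ω) ∂ℙ) * (∫ ω, β * H τ ω ∂ℙ)
      = -(∫ ω, Real.exp (-β * H σ ω) ∂ℙ) * (β / (2 * N)) *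
          ∑ k : Fin N, ∑ l : Fin N,
            τ k * τ l *
              (Real.exp (γ * σ k * σ l) / (1 - p + p * Real.exp (γ * σ k * σ l)) - 1) := by
  set a : Fin N × Fin N → ℝ := fun k => γ * σ k.1 * σ k.2
  have hexp : ∀ ω, exp (-β * H σ ω) = ∏ k, exp (a k * ε k ω) := fun ω => by
    rw [← exp_sum, Fintype.sum_prod_type, hH]
    congr 1
    simp only [a, hγ, mul_sum]
    exact sum_congr rfl fun i _ => sum_congr rfl fun j _ => by ring
  have hlin : ∀ ω, β * H τ ω = ∑ k : Fin N × Fin N, -(γ * (τ k.1 * τ k.2)) * ε k ω := fun ω => by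
    rw [Fintype.sum_prod_type, hH, hγ]
    simp only [mul_sum]
    exact sum_congr rfl fun i _ => sum_congr rfl fun j _ => by ring
  simp only [hexp, hlin]
  rw [integral_mul_sum_sub_mul_integral_sum _ _ (integrable_prod_exp_mul_mul hmeas hval a)
    fun k => integrable_of_ae_zero_or_one (hmeas k).aestronglyMeasurable (hval k)]
  simp only [hmean, hindep.integral_prod_exp_mul_mul_sub_mul_integral hmeas hval a _ hp.le hp1
    (hmean _)]
  have hγp : γ * p = β / (2 * N) := by rw [hγ]; field_simp
  rw [← hγp, Fintype.sum_prod_type]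
  simp only [mul_sum]
  exact sum_congr rfl fun i _ => sum_congr rfl fun j _ => by ring

theorem covariance_exp_hamiltonian_hamiltonian
    {Ω : Type*} [MeasureSpace Ω] [IsProbabilityMeasure (ℙ : Measure Ω)]
    (N : ℕ) (hN : 0 < N) (p : ℝ) (hp : 0 < p) (hp1 : p ≤ 1) (β : ℝ) (hβ : 0 < β)
    (γ : ℝ) (hγ : γ = β / (2 * N * p))
    (ε : Fin N × Fin N → Ω → ℝ)
    (hmeas : ∀ k, Measurable (ε k))
    (hval : ∀ k, ∀ᵐ ω ∂ℙ, ε k ω = 0 ∨ ε k ω = 1)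
    (hmean : ∀ k, ∫ ω, ε k ω ∂ℙ = p)
    (hindep : iIndepFun ε ℙ)
    (σ τ : Fin N → ℝ) (hσ : ∀ i, σ i = 1 ∨ σ i = -1) (hτ : ∀ i, τ i = 1 ∨ τ i = -1)
    (H : (Fin N → ℝ) → Ω → ℝ)
    (hH : ∀ ρ ω, H ρ ω = -(1 / (2 * N * p)) * ∑ i : Fin N, ∑ j : Fin N, ρ i * ρ j * ε (i, j) ω) :
    (∫ ω, Real.exp (-β * H σ ω) * (β * H τ ω) ∂ℙ)
        - (∫ ω, Real.exp (-β * H σ ω) ∂ℙ) * (∫ ω, β * H τ ω ∂ℙ)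
      = -(∫ ω, Real.exp (-β * H σ ω) ∂ℙ) * (β / (2 * N)) *
          ∑ k : Fin N, ∑ l : Fin N,
            τ k * τ l *
              (Real.exp (γ * σ k * σ l) / (1 - p + p * Real.exp (γ * σ k * σ l)) - 1) :=
  covariance_exp_hamiltonian_hamiltonian_general N p hp hp1 β γ hγ ε hmeas hval hmean hindep σ τ H
    hH
end

section
/- Fix x ∈ ℝ and m ∈ ℤ, and define F_m(x,p,z) = log(1 - p + p·e^{xz - m(1-2p)z²/2}). Then the symmetrized function (F_1(1,p,z) + F_1(-1,p,z))/2 admits the expansion (1/2)p²z² - (1/12)p z⁴ + O(p²z⁴) + O(p z⁶) as (p,z) → (0,0); that is, there exist δ > 0 and C > 0 such that for all real p, z with |p| ≤ δ and |z| ≤ δ, |(F_1(1,p,z)+F_1(-1,p,z))/2 - (1/2)p²z² + (1/12)p z⁴| ≤ C(p²z⁴ + |p| z⁶). -/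
open Real Finset

lemma exp_taylor6 {u : ℝ} (hu : |u| ≤ 1) :
    |Real.exp u - (1 + u + u^2/2 + u^3/6 + u^4/24 + u^5/120)| ≤ |u|^6 := by
  have h := Real.exp_bound hu (n := 6) (by norm_num)
  have hs : (∑ m ∈ range 6, u ^ m / m.factorial)
      = 1 + u + u^2/2 + u^3/6 + u^4/24 + u^5/120 := by
    simp [Finset.sum_range_succ, Nat.factorial]
  rw [hs] at h
  norm_num [Nat.factorial] at h
  nlinarith [abs_nonneg u, pow_nonneg (abs_nonneg u) 6, h]

lemma exp_taylor3 {u : ℝ} (hu : |u| ≤ 1) :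
    |Real.exp u - (1 + u + u^2/2)| ≤ |u|^3 := by
  have h := Real.exp_bound hu (n := 3) (by norm_num)
  have hs : (∑ m ∈ range 3, u ^ m / m.factorial) = 1 + u + u^2/2 := by
    simp [Finset.sum_range_succ, Nat.factorial]
  rw [hs] at h
  norm_num [Nat.factorial] at h
  nlinarith [pow_nonneg (abs_nonneg u) 3, h]

lemma exp_taylor2 {u : ℝ} (hu : |u| ≤ 1) :
    |Real.exp u - (1 + u)| ≤ |u|^2 := by
  have h := Real.exp_bound hu (n := 2) (by norm_num)
  have hs : (∑ m ∈ range 2, u ^ m / m.factorial) = 1 + u := by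
    simp [Finset.sum_range_succ, Nat.factorial]
  rw [hs] at h
  norm_num [Nat.factorial] at h
  nlinarith [pow_nonneg (abs_nonneg u) 2, h, sq_abs u]

lemma exp_taylor1 {u : ℝ} (hu : |u| ≤ 1) :
    |Real.exp u - 1| ≤ 2 * |u| := by
  have h := Real.exp_bound hu (n := 1) (by norm_num)
  have hs : (∑ m ∈ range 1, u ^ m / m.factorial) = 1 := by simp
  rw [hs] at h
  norm_num [Nat.factorial] at h
  nlinarith [abs_nonneg u, h]

lemma log_taylor3 {w : ℝ} (hw : |w| ≤ 1/2) :
    |Real.log (1 + w) - (w - w^2/2 + w^3/3)| ≤ 2 * |w|^4 := by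
  have h := Real.abs_log_sub_add_sum_range_le (x := -w) (by rw [abs_neg]; linarith) 3
  have hs : (∑ i ∈ range 3, (-w) ^ (i + 1) / ((i : ℝ) + 1)) = -(w - w^2/2 + w^3/3) := by
    simp [Finset.sum_range_succ]
    ring
  rw [hs] at h
  have h2 : (1 : ℝ) - -w = 1 + w := by ring
  rw [h2, abs_neg] at h
  have h3 : |-(w - w^2/2 + w^3/3) + Real.log (1+w)| = |Real.log (1+w) - (w - w^2/2 + w^3/3)| := by
    congr 1; ring
  rw [h3] at h
  refine h.trans ?_
  have h4 : (1:ℝ) - |w| ≥ 1/2 := by linarith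
  have h5 : (0:ℝ) ≤ |w|^4 := by positivity
  rw [show 3+1=4 from rfl, div_le_iff₀ (by linarith)]
  nlinarith [mul_le_mul_of_nonneg_left h4 h5]

lemma abs_sub_le₂ (a b : ℝ) : |a - b| ≤ |a| + |b| := by
  rw [sub_eq_add_neg]
  exact (abs_add_le _ _).trans (by rw [abs_neg])

/-- `F m x p z = log (1 - p + p * exp (x*z - m*(1-2p)*z^2/2))`. -/
noncomputable def F (m : ℤ) (x p z : ℝ) : ℝ :=
  Real.log (1 - p + p * Real.exp (x * z - (m : ℝ) * (1 - 2 * p) * z ^ 2 / 2))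

set_option maxHeartbeats 2000000 in
theorem F_symmetric_expansion :
    ∃ δ > (0 : ℝ), ∃ C > (0 : ℝ), ∀ p z : ℝ, |p| ≤ δ → |z| ≤ δ →
      |(F 1 1 p z + F 1 (-1) p z) / 2 - (1 / 2) * p ^ 2 * z ^ 2 + (1 / 12) * p * z ^ 4|
        ≤ C * (p ^ 2 * z ^ 4 + |p| * z ^ 6) := by
  refine ⟨1/100, by norm_num, 1000, by norm_num, ?_⟩
  intro p z hp hz
  obtain ⟨hp1, hp2⟩ := abs_le.mp hp
  obtain ⟨hz1, hz2⟩ := abs_le.mp hz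
  have hzabs : (0:ℝ) ≤ |z| := abs_nonneg z
  have hpabs : (0:ℝ) ≤ |p| := abs_nonneg p
  have hz2e : |z|^2 = z^2 := sq_abs z
  have hz4e : |z|^4 = z^4 := by
    rw [show |z|^4 = (|z|^2)^2 by ring, hz2e]; ring
  have hz6e : |z|^6 = z^6 := by
    rw [show |z|^6 = (|z|^2)^3 by ring, hz2e]; ring
  have hp2e : |p|^2 = p^2 := sq_abs p
  have hp4e : |p|^4 = p^4 := by
    rw [show |p|^4 = (|p|^2)^2 by ring, hp2e]; ring
  have hz4pos : (0:ℝ) ≤ z^4 := by positivity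
  have hz6pos : (0:ℝ) ≤ z^6 := by positivity
  have hz2pos : (0:ℝ) ≤ z^2 := by positivity
  have hz2b : z^2 ≤ |z|/100 := by
    nlinarith only [sq_abs z, hz, abs_nonneg z]
  have hzb1 : |z| ≤ 1 := by linarith only [hz]
  have hz2b1 : z^2 ≤ 1 := by linarith only [hz2b, hz]
  have hz2small : z^2 ≤ 1/10000 := by linarith only [hz2b, hz]
  have hz4b1 : z^4 ≤ 1 := by
    nlinarith only [hz2b1, hz2pos]
  have hz6z4 : z^6 ≤ (1/10000)*z^4 := by
    nlinarith only [mul_le_mul_of_nonneg_left hz2small hz4pos]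
  have hp2b : p^2 ≤ 1/10000 := by
    nlinarith only [sq_abs p, hp, abs_nonneg p]
  -- rewrite F terms
  have hF1 : F 1 1 p z = Real.log (1 + p * (Real.exp (z - (1-2*p)*z^2/2) - 1)) := by
    have harg : (1:ℝ) * z - ((1:ℤ) : ℝ) * (1 - 2 * p) * z ^ 2 / 2 = z - (1-2*p)*z^2/2 := by
      push_cast; ring
    unfold F
    rw [harg]
    congr 1
    ring
  have hF2 : F 1 (-1) p z = Real.log (1 + p * (Real.exp (-z - (1-2*p)*z^2/2) - 1)) := by
    have harg : (-1:ℝ) * z - ((1:ℤ) : ℝ) * (1 - 2 * p) * z ^ 2 / 2 = -z - (1-2*p)*z^2/2 := by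
      push_cast; ring
    unfold F
    rw [harg]
    congr 1
    ring
  rw [hF1, hF2]
  set c : ℝ := 1 - 2*p with hc
  set up : ℝ := z - c*z^2/2 with hup
  set um : ℝ := -z - c*z^2/2 with hum
  set Ep : ℝ := Real.exp up with hEp
  set Em : ℝ := Real.exp um with hEm
  set vp : ℝ := Ep - 1 with hvp
  set vm : ℝ := Em - 1 with hvm
  clear_value c up um Ep Em vp vm
  -- c bounds
  have hcl : (49:ℝ)/50 ≤ c := by rw [hc]; linarith only [hp2]
  have hcu : c ≤ (51:ℝ)/50 := by rw [hc]; linarith only [hp1]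
  have hc2u : c^2 ≤ 11/10 := by nlinarith only [hcl, hcu]
  have hc2l : (9:ℝ)/10 ≤ c^2 := by nlinarith only [hcl, hcu]
  have hc3u : c^3 ≤ 12/10 := by nlinarith only [hcl, hcu, hc2l, hc2u]
  have hc3l : (8:ℝ)/10 ≤ c^3 := by nlinarith only [hcl, hcu, hc2l, hc2u]
  have hc4u : c^4 ≤ 13/10 := by nlinarith only [hcl, hcu, hc2l, hc2u]
  have hc4l : (7:ℝ)/10 ≤ c^4 := by nlinarith only [hcl, hcu, hc2l, hc2u]
  have hc5u : c^5 ≤ 14/10 := by nlinarith only [hcl, hcu, hc2l, hc2u, hc3l, hc3u]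
  have hc5l : (6:ℝ)/10 ≤ c^5 := by nlinarith only [hcl, hcu, hc2l, hc2u, hc3l, hc3u]
  have hcabs : |c| ≤ 2 := by
    rw [abs_le]; constructor <;> linarith only [hcl, hcu]
  -- u bounds
  have hcz2 : |c| * z^2 ≤ 2 * z^2 := mul_le_mul_of_nonneg_right hcabs hz2pos
  have hzsq_le : z^2 ≤ |z| := by linarith only [hz2b, hzabs, hz]
  have hupb : |up| ≤ 2*|z| := by
    rw [hup]
    refine (abs_sub_le₂ z (c*z^2/2)).trans ?_
    have h2 : |c*z^2/2| = |c| * z^2/2 := by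
      rw [abs_div, abs_mul, abs_pow, sq_abs]; norm_num
    rw [h2]
    linarith only [hcz2, hzsq_le]
  have humb : |um| ≤ 2*|z| := by
    rw [hum]
    refine (abs_sub_le₂ (-z) (c*z^2/2)).trans ?_
    rw [abs_neg]
    have h2 : |c*z^2/2| = |c| * z^2/2 := by
      rw [abs_div, abs_mul, abs_pow, sq_abs]; norm_num
    rw [h2]
    linarith only [hcz2, hzsq_le]
  have hup1 : |up| ≤ 1 := hupb.trans (by linarith only [hz])
  have hum1 : |um| ≤ 1 := humb.trans (by linarith only [hz])
  have hup2 : |up|^2 ≤ 4*z^2 := by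
    calc |up|^2 ≤ (2*|z|)^2 := pow_le_pow_left₀ (abs_nonneg up) hupb 2
    _ = 4*z^2 := by rw [mul_pow, hz2e]; norm_num
  have hum2 : |um|^2 ≤ 4*z^2 := by
    calc |um|^2 ≤ (2*|z|)^2 := pow_le_pow_left₀ (abs_nonneg um) humb 2
    _ = 4*z^2 := by rw [mul_pow, hz2e]; norm_num
  have hup3 : |up|^3 ≤ 8*|z|^3 := by
    calc |up|^3 ≤ (2*|z|)^3 := pow_le_pow_left₀ (abs_nonneg up) hupb 3
    _ = 8*|z|^3 := by ring
  have hum3 : |um|^3 ≤ 8*|z|^3 := by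
    calc |um|^3 ≤ (2*|z|)^3 := pow_le_pow_left₀ (abs_nonneg um) humb 3
    _ = 8*|z|^3 := by ring
  have hup6 : |up|^6 ≤ 64*z^6 := by
    calc |up|^6 ≤ (2*|z|)^6 := pow_le_pow_left₀ (abs_nonneg up) hupb 6
    _ = 64*z^6 := by rw [mul_pow, hz6e]; norm_num
  have hum6 : |um|^6 ≤ 64*z^6 := by
    calc |um|^6 ≤ (2*|z|)^6 := pow_le_pow_left₀ (abs_nonneg um) humb 6
    _ = 64*z^6 := by rw [mul_pow, hz6e]; norm_num
  -- v bounds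
  have hvpb : |vp| ≤ 4*|z| := by
    rw [hvp, hEp]
    refine (exp_taylor1 hup1).trans ?_
    linarith only [hupb]
  have hvmb : |vm| ≤ 4*|z| := by
    rw [hvm, hEm]
    refine (exp_taylor1 hum1).trans ?_
    linarith only [humb]
  -- D1 bound
  have hQb : |(-c^3/24 + c^2/8 - c/24) + z^2*(c^4/192 - c^3/48) - c^5*z^4/1920| ≤ 2 := by
    have e1 : |(-c^3/24 + c^2/8 - c/24)| ≤ 1 := by
      rw [abs_le]
      constructor <;> linarith only [hcl, hcu, hc2l, hc2u, hc3l, hc3u]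
    have e2 : |z^2*(c^4/192 - c^3/48)| ≤ 1/2 := by
      rw [abs_mul, abs_of_nonneg hz2pos]
      have e2i : |c^4/192 - c^3/48| ≤ 1/2 := by
        rw [abs_le]
        constructor <;> linarith only [hc3l, hc3u, hc4l, hc4u]
      refine le_trans (mul_le_mul hz2b1 e2i (abs_nonneg _) (by norm_num)) (by norm_num)
    have e3 : |c^5*z^4/1920| ≤ 1/2 := by
      rw [abs_div, abs_mul, abs_of_nonneg hz4pos, abs_of_pos (by norm_num : (0:ℝ) < 1920)]
      have e3i : |c^5| ≤ 14/10 := by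
        rw [abs_le]; constructor <;> linarith only [hc5l, hc5u]
      have := mul_le_mul e3i hz4b1 hz4pos (by norm_num : (0:ℝ) ≤ 14/10)
      linarith only [this]
    calc |(-c^3/24 + c^2/8 - c/24) + z^2*(c^4/192 - c^3/48) - c^5*z^4/1920|
        ≤ |(-c^3/24 + c^2/8 - c/24) + z^2*(c^4/192 - c^3/48)| + |c^5*z^4/1920| :=
          abs_sub_le₂ _ _
      _ ≤ |(-c^3/24 + c^2/8 - c/24)| + |z^2*(c^4/192 - c^3/48)| + |c^5*z^4/1920| := by
          linarith only [abs_add_le (-c^3/24 + c^2/8 - c/24) (z^2*(c^4/192 - c^3/48))]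
      _ ≤ 2 := by linarith only [e1, e2, e3]
  have ha1b : |Ep - (1 + up + up^2/2 + up^3/6 + up^4/24 + up^5/120)| ≤ 64*z^6 := by
    rw [hEp]; exact (exp_taylor6 hup1).trans hup6
  have ha2b : |Em - (1 + um + um^2/2 + um^3/6 + um^4/24 + um^5/120)| ≤ 64*z^6 := by
    rw [hEm]; exact (exp_taylor6 hum1).trans hum6
  have hkey1 : vp + vm - (2*p*z^2 + (p^2 - 1/6)*z^4)
      = (Ep - (1 + up + up^2/2 + up^3/6 + up^4/24 + up^5/120))
      + (Em - (1 + um + um^2/2 + um^3/6 + um^4/24 + um^5/120))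
      + z^6 * ((-c^3/24 + c^2/8 - c/24) + z^2*(c^4/192 - c^3/48) - c^5*z^4/1920) := by
    rw [hvp, hvm, hup, hum, hc]; ring
  have hd1b : |vp + vm - (2*p*z^2 + (p^2 - 1/6)*z^4)| ≤ 130*z^6 := by
    rw [hkey1]
    have t := abs_add_three (Ep - (1 + up + up^2/2 + up^3/6 + up^4/24 + up^5/120))
      (Em - (1 + um + um^2/2 + um^3/6 + um^4/24 + um^5/120))
      (z^6 * ((-c^3/24 + c^2/8 - c/24) + z^2*(c^4/192 - c^3/48) - c^5*z^4/1920))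
    have tz : |z^6 * ((-c^3/24 + c^2/8 - c/24) + z^2*(c^4/192 - c^3/48) - c^5*z^4/1920)|
        ≤ 2*z^6 := by
      rw [abs_mul, abs_of_nonneg hz6pos]
      have := mul_le_mul_of_nonneg_left hQb hz6pos
      linarith only [this]
    linarith only [t, tz, ha1b, ha2b, hz6pos]
  -- D2 bound
  have hb1b : |Ep - (1 + up + up^2/2)| ≤ 8*|z|^3 := by
    rw [hEp]; exact (exp_taylor3 hup1).trans hup3
  have hb2b : |Em - (1 + um + um^2/2)| ≤ 8*|z|^3 := by
    rw [hEm]; exact (exp_taylor3 hum1).trans hum3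
  have hapb : |up + up^2/2| ≤ 3*|z| := by
    refine (abs_add_le up (up^2/2)).trans ?_
    have h1 : |up^2/2| = |up|^2/2 := by rw [abs_div, abs_pow]; norm_num
    rw [h1]
    linarith only [hupb, hup2, hz2b, hzabs, hz]
  have hamb : |um + um^2/2| ≤ 3*|z| := by
    refine (abs_add_le um (um^2/2)).trans ?_
    have h1 : |um^2/2| = |um|^2/2 := by rw [abs_div, abs_pow]; norm_num
    rw [h1]
    linarith only [humb, hum2, hz2b, hzabs, hz]
  have hz34 : |z| * |z|^3 = z^4 := by rw [show |z| * |z|^3 = |z|^4 by ring, hz4e]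
  have hz36 : (|z|^3)^2 = z^6 := by rw [show (|z|^3)^2 = |z|^6 by ring, hz6e]
  have hcross : ∀ a b : ℝ, |a| ≤ 3*|z| → |b| ≤ 8*|z|^3 →
      |2*a*b + b^2| ≤ 49*z^4 := by
    intro a b ha hb
    refine (abs_add_le (2*a*b) (b^2)).trans ?_
    have h1 : |2*a*b| = 2*(|a| * |b|) := by
      rw [abs_mul, abs_mul]; rw [abs_of_pos (by norm_num : (0:ℝ) < 2)]; ring
    have h2 : |b^2| = |b|^2 := abs_pow b 2
    rw [h1, h2]
    have hab : |a| * |b| ≤ 24*z^4 := by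
      have := mul_le_mul ha hb (abs_nonneg b) (by positivity)
      calc |a| * |b| ≤ (3*|z|)*(8*|z|^3) := this
      _ = 24*(|z| * |z|^3) := by ring
      _ = 24*z^4 := by rw [hz34]
    have hb2 : |b|^2 ≤ z^4 := by
      have h3 : |b|^2 ≤ (8*|z|^3)^2 := pow_le_pow_left₀ (abs_nonneg b) hb 2
      have h4 : (8*|z|^3)^2 = 64*z^6 := by rw [mul_pow, hz36]; norm_num
      rw [h4] at h3
      linarith only [h3, hz6z4, hz4pos]
    linarith only [hab, hb2]
  have hRb : |(c^2/2 - 3*c + 1/2) + z^2*(3*c^2/4 - c^3/4) + c^4*z^4/32| ≤ 5 := by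
    have e1 : |c^2/2 - 3*c + 1/2| ≤ 3 := by
      rw [abs_le]; constructor <;> linarith only [hcl, hcu, hc2l, hc2u]
    have e2 : |z^2*(3*c^2/4 - c^3/4)| ≤ 1 := by
      rw [abs_mul, abs_of_nonneg hz2pos]
      have e2i : |3*c^2/4 - c^3/4| ≤ 1 := by
        rw [abs_le]; constructor <;> linarith only [hc2l, hc2u, hc3l, hc3u]
      refine le_trans (mul_le_mul hz2b1 e2i (abs_nonneg _) (by norm_num)) (by norm_num)
    have e3 : |c^4*z^4/32| ≤ 1/2 := by
      rw [abs_div, abs_mul, abs_of_nonneg hz4pos, abs_of_pos (by norm_num : (0:ℝ) < 32)]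
      have e3i : |c^4| ≤ 13/10 := by
        rw [abs_le]; constructor <;> linarith only [hc4l, hc4u]
      have := mul_le_mul e3i hz4b1 hz4pos (by norm_num : (0:ℝ) ≤ 13/10)
      linarith only [this]
    calc |(c^2/2 - 3*c + 1/2) + z^2*(3*c^2/4 - c^3/4) + c^4*z^4/32|
        ≤ |c^2/2 - 3*c + 1/2| + |z^2*(3*c^2/4 - c^3/4)| + |c^4*z^4/32| := abs_add_three _ _ _
      _ ≤ 5 := by linarith only [e1, e2, e3]
  have hkey2 : vp^2 + vm^2 - 2*z^2
      = (2*(up + up^2/2)*(Ep - (1 + up + up^2/2)) + (Ep - (1 + up + up^2/2))^2)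
      + (2*(um + um^2/2)*(Em - (1 + um + um^2/2)) + (Em - (1 + um + um^2/2))^2)
      + z^4*((c^2/2 - 3*c + 1/2) + z^2*(3*c^2/4 - c^3/4) + c^4*z^4/32) := by
    rw [hvp, hvm, hup, hum]; ring
  have hd2b : |vp^2 + vm^2 - 2*z^2| ≤ 200*z^4 := by
    rw [hkey2]
    have t := abs_add_three
      (2*(up + up^2/2)*(Ep - (1 + up + up^2/2)) + (Ep - (1 + up + up^2/2))^2)
      (2*(um + um^2/2)*(Em - (1 + um + um^2/2)) + (Em - (1 + um + um^2/2))^2)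
      (z^4*((c^2/2 - 3*c + 1/2) + z^2*(3*c^2/4 - c^3/4) + c^4*z^4/32))
    have t1 := hcross _ _ hapb hb1b
    have t2 := hcross _ _ hamb hb2b
    have tz : |z^4*((c^2/2 - 3*c + 1/2) + z^2*(3*c^2/4 - c^3/4) + c^4*z^4/32)| ≤ 5*z^4 := by
      rw [abs_mul, abs_of_nonneg hz4pos]
      have := mul_le_mul_of_nonneg_left hRb hz4pos
      linarith only [this]
    linarith only [t, t1, t2, tz, hz4pos]
  -- D3 bound
  have hs1b : |Ep - (1 + up)| ≤ 4*z^2 := by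
    rw [hEp]; exact (exp_taylor2 hup1).trans hup2
  have hs2b : |Em - (1 + um)| ≤ 4*z^2 := by
    rw [hEm]; exact (exp_taylor2 hum1).trans hum2
  have hcube : ∀ u s : ℝ, |u| ≤ 2*|z| → |s| ≤ 4*z^2 →
      |3*u^2*s + 3*u*s^2 + s^3| ≤ 100*z^4 := by
    intro u s hu hs
    have hu2 : |u|^2 ≤ 4*z^2 := by
      calc |u|^2 ≤ (2*|z|)^2 := pow_le_pow_left₀ (abs_nonneg u) hu 2
      _ = 4*z^2 := by rw [mul_pow, hz2e]; norm_num
    have hs2 : |s|^2 ≤ 16*z^4 := by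
      calc |s|^2 ≤ (4*z^2)^2 := pow_le_pow_left₀ (abs_nonneg s) hs 2
      _ = 16*z^4 := by ring
    have h1 : |3*u^2*s| ≤ 48*z^4 := by
      rw [abs_mul, abs_mul, abs_pow, show |(3:ℝ)| = 3 by norm_num]
      have := mul_le_mul hu2 hs (abs_nonneg s) (by positivity : (0:ℝ) ≤ 4*z^2)
      nlinarith only [this]
    have h2 : |3*u*s^2| ≤ 26*z^4 := by
      rw [abs_mul, abs_mul, abs_pow, show |(3:ℝ)| = 3 by norm_num]
      have hprod := mul_le_mul hu hs2 (pow_nonneg (abs_nonneg s) 2)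
        (by positivity : (0:ℝ) ≤ 2*|z|)
      have hz4z := mul_le_mul_of_nonneg_right hz hz4pos
      nlinarith only [hprod, hz4z, hz4pos]
    have h3 : |s^3| ≤ 26*z^4 := by
      rw [abs_pow]
      have h3a : |s|^3 ≤ (4*z^2)^3 := pow_le_pow_left₀ (abs_nonneg s) hs 3
      have h3b : (4*z^2)^3 = 64*(z^4*z^2) := by ring
      rw [h3b] at h3a
      have h3c : z^4*z^2 ≤ z^4*(1/10000) := mul_le_mul_of_nonneg_left hz2small hz4pos
      linarith only [h3a, h3c, hz4pos]
    calc |3*u^2*s + 3*u*s^2 + s^3| ≤ |3*u^2*s| + |3*u*s^2| + |s^3| := abs_add_three _ _ _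
      _ ≤ 100*z^4 := by linarith only [h1, h2, h3]
  have hkey3 : vp^3 + vm^3
      = (3*up^2*(Ep - (1 + up)) + 3*up*(Ep - (1 + up))^2 + (Ep - (1 + up))^3)
      + (3*um^2*(Em - (1 + um)) + 3*um*(Em - (1 + um))^2 + (Em - (1 + um))^3)
      + z^4*(-3*c - c^3*z^2/4) := by
    rw [hvp, hvm, hup, hum]; ring
  have hd3b : |vp^3 + vm^3| ≤ 231*z^4 := by
    rw [hkey3]
    have t := abs_add_three
      (3*up^2*(Ep - (1 + up)) + 3*up*(Ep - (1 + up))^2 + (Ep - (1 + up))^3)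
      (3*um^2*(Em - (1 + um)) + 3*um*(Em - (1 + um))^2 + (Em - (1 + um))^3)
      (z^4*(-3*c - c^3*z^2/4))
    have t1 := hcube up _ hupb hs1b
    have t2 := hcube um _ humb hs2b
    have tz : |z^4*(-3*c - c^3*z^2/4)| ≤ 4*z^4 := by
      rw [abs_mul, abs_of_nonneg hz4pos]
      have e : |(-3*c - c^3*z^2/4)| ≤ 4 := by
        rw [abs_le]
        have hq : c^3*z^2 ≤ (12/10)*z^2 := mul_le_mul_of_nonneg_right hc3u hz2pos
        have hql : (0:ℝ) ≤ c^3*z^2 := mul_nonneg (by linarith only [hc3l]) hz2pos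
        constructor <;> linarith only [hcl, hcu, hq, hql, hz2b1]
      have := mul_le_mul_of_nonneg_left e hz4pos
      linarith only [this]
    linarith only [t, t1, t2, tz, hz4pos]
  -- log remainders
  have hwpb : |p*vp| ≤ 4*(|p| * |z|) := by
    rw [abs_mul]
    calc |p| * |vp| ≤ |p| *(4*|z|) := mul_le_mul_of_nonneg_left hvpb (abs_nonneg p)
    _ = 4*(|p| * |z|) := by ring
  have hwmb : |p*vm| ≤ 4*(|p| * |z|) := by
    rw [abs_mul]
    calc |p| * |vm| ≤ |p| *(4*|z|) := mul_le_mul_of_nonneg_left hvmb (abs_nonneg p)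
    _ = 4*(|p| * |z|) := by ring
  have hpz : |p| * |z| ≤ 1/10000 := by
    have := mul_le_mul hp hz hzabs (by norm_num : (0:ℝ) ≤ 1/100)
    linarith only [this]
  have hwp12 : |p*vp| ≤ 1/2 := by linarith only [hwpb, hpz]
  have hwm12 : |p*vm| ≤ 1/2 := by linarith only [hwmb, hpz]
  have hp4b : p^4 ≤ (1/10000)*p^2 := by
    nlinarith only [mul_le_mul_of_nonneg_right hp2b (sq_nonneg p)]
  have hrho : ∀ w : ℝ, |w| ≤ 4*(|p| * |z|) → |w| ≤ 1/2 →
      |Real.log (1 + w) - (w - w^2/2 + w^3/3)| ≤ p^2*z^4 := by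
    intro w hw1 hw2
    refine (log_taylor3 hw2).trans ?_
    have h1 : |w|^4 ≤ (4*(|p| * |z|))^4 := pow_le_pow_left₀ (abs_nonneg w) hw1 4
    have h2 : (4*(|p| * |z|))^4 = 256*(p^4*z^4) := by
      rw [mul_pow, mul_pow, hp4e, hz4e]; norm_num
    rw [h2] at h1
    have h3 : p^4*z^4 ≤ ((1/10000)*p^2)*z^4 := mul_le_mul_of_nonneg_right hp4b hz4pos
    nlinarith only [h1, h3, mul_nonneg (sq_nonneg p) hz4pos]
  have hrhopb := hrho (p*vp) hwpb hwp12
  have hrhomb := hrho (p*vm) hwmb hwm12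
  -- final assembly
  have hGid : (Real.log (1 + p*vp) + Real.log (1 + p*vm))/2 - 1/2*p^2*z^2 + 1/12*p*z^4
      = ((Real.log (1 + p*vp) - (p*vp - (p*vp)^2/2 + (p*vp)^3/3))
          + (Real.log (1 + p*vm) - (p*vm - (p*vm)^2/2 + (p*vm)^3/3)))/2
      + (p/2)*(vp + vm - (2*p*z^2 + (p^2 - 1/6)*z^4))
      - (p^2/4)*(vp^2 + vm^2 - 2*z^2)
      + (p^3/6)*(vp^3 + vm^3)
      + p^3*z^4/2 := by ring
  rw [hGid]
  have hT1 : |((Real.log (1 + p*vp) - (p*vp - (p*vp)^2/2 + (p*vp)^3/3))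
      + (Real.log (1 + p*vm) - (p*vm - (p*vm)^2/2 + (p*vm)^3/3)))/2| ≤ p^2*z^4 := by
    rw [abs_div, abs_of_pos (by norm_num : (0:ℝ) < 2)]
    have := abs_add_le (Real.log (1 + p*vp) - (p*vp - (p*vp)^2/2 + (p*vp)^3/3))
      (Real.log (1 + p*vm) - (p*vm - (p*vm)^2/2 + (p*vm)^3/3))
    linarith only [this, hrhopb, hrhomb]
  have hT2 : |(p/2)*(vp + vm - (2*p*z^2 + (p^2 - 1/6)*z^4))| ≤ 65*(|p| * z^6) := by
    rw [abs_mul, abs_div, abs_of_pos (by norm_num : (0:ℝ) < 2)]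
    calc |p|/2 * |vp + vm - (2*p*z^2 + (p^2 - 1/6)*z^4)|
        ≤ |p|/2 * (130*z^6) := mul_le_mul_of_nonneg_left hd1b (by positivity)
      _ = 65*(|p| * z^6) := by ring
  have hT3 : |(p^2/4)*(vp^2 + vm^2 - 2*z^2)| ≤ 50*(p^2*z^4) := by
    rw [abs_mul, abs_of_nonneg (by positivity : (0:ℝ) ≤ p^2/4)]
    calc p^2/4 * |vp^2 + vm^2 - 2*z^2| ≤ p^2/4 * (200*z^4) :=
        mul_le_mul_of_nonneg_left hd2b (by positivity)
      _ = 50*(p^2*z^4) := by ring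
  have hp3b : |p|^3 ≤ (1/100)*p^2 := by
    have e : |p|^3 = |p| *p^2 := by rw [← sq_abs]; ring
    rw [e]
    exact mul_le_mul_of_nonneg_right hp (sq_nonneg p)
  have hp3z4 : |p|^3*z^4 ≤ (1/100)*(p^2*z^4) := by
    have := mul_le_mul_of_nonneg_right hp3b hz4pos
    linarith only [this]
  have hT4 : |(p^3/6)*(vp^3 + vm^3)| ≤ p^2*z^4 := by
    rw [abs_mul, abs_div, abs_pow, abs_of_pos (by norm_num : (0:ℝ) < 6)]
    have h1 : |p|^3/6 * |vp^3 + vm^3| ≤ |p|^3/6 * (231*z^4) :=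
      mul_le_mul_of_nonneg_left hd3b (by positivity)
    have h2 : |p|^3/6 * (231*z^4) = (231/6)*(|p|^3*z^4) := by ring
    rw [h2] at h1
    have hnn : (0:ℝ) ≤ p^2*z^4 := by positivity
    linarith only [h1, hp3z4, hnn]
  have hT5 : |p^3*z^4/2| ≤ p^2*z^4 := by
    rw [abs_div, abs_mul, abs_pow, abs_of_nonneg hz4pos,
      abs_of_pos (by norm_num : (0:ℝ) < 2)]
    have hnn : (0:ℝ) ≤ p^2*z^4 := by positivity
    linarith only [hp3z4, hnn]
  have htri : ∀ a b c d e : ℝ, |a + b - c + d + e| ≤ |a| + |b| + |c| + |d| + |e| := by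
    intro a b c d e
    have t1 := abs_add_le (a + b - c + d) e
    have t2 := abs_add_le (a + b - c) d
    have t3 := abs_sub_le₂ (a + b) c
    have t4 := abs_add_le a b
    linarith only [t1, t2, t3, t4]
  refine (htri _ _ _ _ _).trans ?_
  have hppos : (0:ℝ) ≤ p^2*z^4 := by positivity
  have hpz6 : (0:ℝ) ≤ |p| * z^6 := by positivity
  linarith only [hT1, hT2, hT3, hT4, hT5, hppos, hpz6]
end

section
/- With F_m(x,p,z) = log(1 - p + p·e^{xz - m(1-2p)z²/2}), the antisymmetric combination (F_1(1,p,z) - F_1(-1,p,z))/2 equals p z + O(p z³) as (p,z) → (0,0); i.e., there exist δ, C > 0 such that for |p| ≤ δ, |z| ≤ δ: |(F_1(1,p,z) - F_1(-1,p,z))/2 - p z| ≤ C |p| |z|³. -/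
lemma expE {x : ℝ} (hx : |x| ≤ 1) : |Real.exp x - (1 + x + x^2/2)| ≤ |x|^3 := by
  have h := Real.exp_bound hx (n := 3) (by norm_num)
  have hs : ∑ m ∈ Finset.range 3, x ^ m / m.factorial = 1 + x + x^2/2 := by
    simp [Finset.sum_range_succ]
    try ring
  rw [hs] at h
  have : |x|^3 * ((3:ℕ).succ / ((3:ℕ).factorial * 3)) ≤ |x|^3 := by
    have : ((3:ℕ).succ / ((3:ℕ).factorial * 3) : ℝ) = 2/9 := by norm_num [Nat.factorial]
    rw [this]; nlinarith [abs_nonneg x, pow_nonneg (abs_nonneg x) 3]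
  linarith

lemma logE {u : ℝ} (hu : |u| ≤ 1/2) : |Real.log (1+u) - u + u^2/2| ≤ 2* |u|^3 := by
  have h1 : |(-u)| < 1 := by rw [abs_neg]; linarith
  have h := Real.abs_log_sub_add_sum_range_le h1 2
  have hs : ∑ i ∈ Finset.range 2, (-u) ^ (i+1) / (i+1) = -u + u^2/2 := by
    simp [Finset.sum_range_succ]
    try ring
  rw [hs] at h
  have h2 : (1 : ℝ) - -u = 1 + u := by ring
  rw [h2, abs_neg] at h
  have h3 : |u|^3 / (1 - |u|) ≤ 2* |u|^3 := by
    rw [div_le_iff₀ (by linarith)]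
    nlinarith [pow_nonneg (abs_nonneg u) 3, abs_nonneg u]
  have he : Real.log (1+u) - u + u^2/2 = -u + u ^ 2 / 2 + Real.log (1 + u) := by ring
  rw [he]
  exact le_trans h h3

set_option maxHeartbeats 1000000 in
theorem F_antisymmetric_expansion :
    ∃ δ > (0 : ℝ), ∃ C > (0 : ℝ), ∀ p z : ℝ, |p| ≤ δ → |z| ≤ δ →
      |(F 1 1 p z - F 1 (-1) p z) / 2 - p * z| ≤ C * |p| * |z| ^ 3 := by
  refine ⟨1/10, by norm_num, 100, by norm_num, ?_⟩
  intro p z hp hz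
  obtain ⟨hp1, hp2⟩ := abs_le.mp hp
  obtain ⟨hz1, hz2⟩ := abs_le.mp hz
  have hzsq2 : |z|^2 ≤ (1/10) * |z| := by
    have h := mul_le_mul_of_nonneg_right hz (abs_nonneg z)
    calc |z|^2 = |z| * |z| := sq (|z|) ▸ rfl
      _ ≤ (1/10) * |z| := h
  set a : ℝ := (1 - 2*p) * z^2 / 2 with ha_def
  set s : ℝ := z - a with hs_def
  set t : ℝ := -z - a with ht_def
  set u : ℝ := p * (Real.exp s - 1) with hu_def
  set v : ℝ := p * (Real.exp t - 1) with hv_def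
  set Es : ℝ := Real.exp s - (1 + s + s^2/2) with hEs_def
  set Et : ℝ := Real.exp t - (1 + t + t^2/2) with hEt_def
  -- rewrite F values
  have hF1 : F 1 1 p z = Real.log (1 + u) := by
    rw [F, hu_def]
    congr 1
    have : (1:ℝ) * z - ((1:ℤ):ℝ) * (1 - 2*p) * z^2 / 2 = s := by
      rw [hs_def, ha_def]; push_cast; ring
    rw [this]; ring
  have hF2 : F 1 (-1) p z = Real.log (1 + v) := by
    rw [F, hv_def]
    congr 1
    have : (-1:ℝ) * z - ((1:ℤ):ℝ) * (1 - 2*p) * z^2 / 2 = t := by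
      rw [ht_def, ha_def]; push_cast; ring
    rw [this]; ring
  clear_value a s t u v Es Et
  -- basic size estimates
  have haz : |a| ≤ z^2 := by
    have h1 := mul_le_mul_of_nonneg_right hp2 (sq_nonneg z)
    have h2 := mul_le_mul_of_nonneg_right hp1 (sq_nonneg z)
    rw [abs_le, ha_def]; constructor <;> linarith [sq_nonneg z]
  have hzsq : z^2 ≤ |z| := by
    linarith [hzsq2, (sq_abs z).le, (sq_abs z).ge, abs_nonneg z]
  have hs2 : |s| ≤ 2* |z| := by
    calc |s| ≤ |z| + |a| := by rw [hs_def]; exact abs_sub _ _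
      _ ≤ 2* |z| := by linarith
  have ht2 : |t| ≤ 2* |z| := by
    have h1 : |t| ≤ |z| + |a| := by
      rw [ht_def]
      calc |(-z - a)| ≤ |(-z)| + |a| := abs_sub _ _
        _ = |z| + |a| := by rw [abs_neg]
    linarith
  have hs1 : |s| ≤ 1 := by linarith [abs_nonneg z, hz]
  have ht1 : |t| ≤ 1 := by linarith [abs_nonneg z, hz]
  have hEs := expE hs1
  have hEt := expE ht1
  have hz3 : |s|^3 ≤ 8* |z|^3 := by
    have h := pow_le_pow_left₀ (abs_nonneg s) hs2 3
    have h2 : (2* |z|)^3 = 8* |z|^3 := by ring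
    linarith [h, h2.le, h2.ge]
  have ht3 : |t|^3 ≤ 8* |z|^3 := by
    have h := pow_le_pow_left₀ (abs_nonneg t) ht2 3
    have h2 : (2* |z|)^3 = 8* |z|^3 := by ring
    linarith [h, h2.le, h2.ge]
  have hEs8 : |Es| ≤ 8* |z|^3 := by rw [hEs_def]; exact le_trans hEs hz3
  have hEt8 : |Et| ≤ 8* |z|^3 := by rw [hEt_def]; exact le_trans hEt ht3
  have hz2b : |z|^2 ≤ 1/100 := by linarith [hzsq2, hz, abs_nonneg z]
  have hzc : |z|^3 ≤ (1/100)* |z| := by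
    calc |z|^3 = |z|^2 * |z| := by ring
      _ ≤ (1/100)* |z| := by
        have := mul_le_mul_of_nonneg_right hz2b (abs_nonneg z)
        linarith
  have hz32 : |z|^3 ≤ (1/10) * |z|^2 := by
    calc |z|^3 = |z|^2 * |z| := by ring
      _ ≤ |z|^2 * (1/10) := mul_le_mul_of_nonneg_left hz (sq_nonneg (|z|))
      _ = (1/10) * |z|^2 := by ring
  -- |exp s - 1| ≤ 3|z|
  have hes : |Real.exp s - 1| ≤ 3* |z| := by
    have h1 : Real.exp s - 1 = s + s^2/2 + Es := by rw [hEs_def]; ring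
    rw [h1]
    calc |s + s^2/2 + Es| ≤ |s + s^2/2| + |Es| := abs_add_le _ _
      _ ≤ |s| + |s^2/2| + |Es| := by linarith [abs_add_le s (s^2/2)]
      _ ≤ 2* |z| + (2* |z|)^2/2 + 8* |z|^3 := by
          refine add_le_add (add_le_add hs2 ?_) hEs8
          rw [abs_div, abs_pow, sq_abs, show |(2:ℝ)| = 2 from by norm_num]
          have hss : s^2 ≤ (2* |z|)^2 := by
            rw [← sq_abs s]; exact pow_le_pow_left₀ (abs_nonneg s) hs2 2
          linarith
      _ ≤ 3* |z| := by
          have e1 : (2* |z|)^2/2 = 2* |z|^2 := by ring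
          linarith [hzsq2, hzc, e1.le, e1.ge, abs_nonneg z]
  have het : |Real.exp t - 1| ≤ 3* |z| := by
    have h1 : Real.exp t - 1 = t + t^2/2 + Et := by rw [hEt_def]; ring
    rw [h1]
    calc |t + t^2/2 + Et| ≤ |t + t^2/2| + |Et| := abs_add_le _ _
      _ ≤ |t| + |t^2/2| + |Et| := by linarith [abs_add_le t (t^2/2)]
      _ ≤ 2* |z| + (2* |z|)^2/2 + 8* |z|^3 := by
          refine add_le_add (add_le_add ht2 ?_) hEt8
          rw [abs_div, abs_pow, sq_abs, show |(2:ℝ)| = 2 from by norm_num]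
          have htt : t^2 ≤ (2* |z|)^2 := by
            rw [← sq_abs t]; exact pow_le_pow_left₀ (abs_nonneg t) ht2 2
          linarith
      _ ≤ 3* |z| := by
          have e1 : (2* |z|)^2/2 = 2* |z|^2 := by ring
          linarith [hzsq2, hzc, e1.le, e1.ge, abs_nonneg z]
  have hu3 : |u| ≤ 3* |p| * |z| := by
    rw [hu_def, abs_mul]
    calc |p| * |Real.exp s - 1| ≤ |p| * (3* |z|) := mul_le_mul_of_nonneg_left hes (abs_nonneg p)
      _ = 3* |p| * |z| := by ring
  have hv3 : |v| ≤ 3* |p| * |z| := by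
    rw [hv_def, abs_mul]
    calc |p| * |Real.exp t - 1| ≤ |p| * (3* |z|) := mul_le_mul_of_nonneg_left het (abs_nonneg p)
      _ = 3* |p| * |z| := by ring
  have hpz : |p| * |z| ≤ 1/100 := by
    calc |p| * |z| ≤ (1/10) * (1/10) := mul_le_mul hp hz (abs_nonneg z) (by norm_num)
      _ = 1/100 := by norm_num
  have hu12 : |u| ≤ 1/2 := by
    have : 3* |p| * |z| = 3*(|p| * |z|) := by ring
    linarith [hu3, hpz, this.le, this.ge]
  have hv12 : |v| ≤ 1/2 := by
    have : 3* |p| * |z| = 3*(|p| * |z|) := by ring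
    linarith [hv3, hpz, this.le, this.ge]
  have hLu := logE hu12
  have hLv := logE hv12
  set Lu : ℝ := Real.log (1+u) - u + u^2/2 with hLu_def
  set Lv : ℝ := Real.log (1+v) - v + v^2/2 with hLv_def
  clear_value Lu Lv
  -- sum and difference bounds
  have hdiff : |u - v| ≤ 6* |p| * |z| := by
    have h1 : u - v = p * (Real.exp s - Real.exp t) := by rw [hu_def, hv_def]; ring
    rw [h1, abs_mul]
    have h2 : |Real.exp s - Real.exp t| ≤ 6* |z| := by
      calc |Real.exp s - Real.exp t| = |(Real.exp s - 1) - (Real.exp t - 1)| := by ring_nf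
        _ ≤ |Real.exp s - 1| + |Real.exp t - 1| := abs_sub _ _
        _ ≤ 6* |z| := by linarith
    calc |p| * |Real.exp s - Real.exp t| ≤ |p| * (6* |z|) :=
          mul_le_mul_of_nonneg_left h2 (abs_nonneg p)
      _ = 6* |p| * |z| := by ring
  have hsum : |u + v| ≤ 5* |p| *z^2 := by
    have h1 : u + v = p * (Es + Et - 2*a + z^2 + a^2) := by
      rw [hu_def, hv_def, hEs_def, hEt_def, hs_def, ht_def]; ring
    rw [h1, abs_mul]
    have h2 : |Es + Et - 2*a + z^2 + a^2| ≤ 5*z^2 := by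
      have haa : |a^2| ≤ z^2 * z^2 := by
        rw [abs_pow]
        calc |a|^2 ≤ (z^2)^2 := pow_le_pow_left₀ (abs_nonneg a) haz 2
          _ = z^2 * z^2 := by ring
      have t1 : |Es + Et - 2*a + z^2 + a^2| ≤ |Es| + |Et| + 2* |a| + z^2 + |a^2| := by
        have := abs_add_le (Es + Et - 2*a + z^2) (a^2)
        have := abs_add_le (Es + Et - 2*a) (z^2)
        have := abs_sub (Es + Et) (2*a)
        have := abs_add_le Es Et
        have h2a : |2*a| = 2* |a| := by rw [abs_mul]; norm_num
        have hz2' : |z^2| = z^2 := abs_of_nonneg (sq_nonneg z)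
        calc |Es + Et - 2*a + z^2 + a^2| ≤ |Es + Et - 2*a + z^2| + |a^2| := abs_add_le _ _
          _ ≤ |Es + Et - 2*a| + |z^2| + |a^2| := by linarith [abs_add_le (Es + Et - 2*a) (z^2)]
          _ ≤ |Es + Et| + |2*a| + |z^2| + |a^2| := by linarith [abs_sub (Es + Et) (2*a)]
          _ ≤ |Es| + |Et| + 2* |a| + z^2 + |a^2| := by
              rw [h2a, hz2']; linarith [abs_add_le Es Et]
      have h16 : 16* |z|^3 ≤ (16/10)*z^2 := by
        linarith [hz32, (sq_abs z).le, (sq_abs z).ge]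
      have hzz : z^2 ≤ 1/100 := by
        linarith [hz2b, (sq_abs z).le, (sq_abs z).ge]
      have haa2 : z^2 * z^2 ≤ (1/100) * z^2 := mul_le_mul_of_nonneg_right hzz (sq_nonneg z)
      linarith [t1, hEs8, hEt8, haz, haa, h16, haa2, sq_nonneg z]
    calc |p| * |Es + Et - 2*a + z^2 + a^2| ≤ |p| * (5*z^2) :=
          mul_le_mul_of_nonneg_left h2 (abs_nonneg p)
      _ = 5* |p| * z^2 := by ring
  -- key algebraic identity
  have key : (Real.log (1+u) - Real.log (1+v))/2 - p*z
      = (Lu - Lv)/2 + (-(p*a*z)) + p*(Es - Et)/2 + (-((u-v)*(u+v)/4)) := by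
    have hdid : u - v = p * (2*z - 2*a*z + Es - Et) := by
      rw [hu_def, hv_def, hEs_def, hEt_def, hs_def, ht_def]; ring
    rw [hLu_def, hLv_def]
    have : (u - v)/2 = p*z - p*a*z + p*(Es - Et)/2 := by rw [hdid]; ring
    linarith [this]
  -- final bounds on each piece
  have hppos : (0:ℝ) ≤ |p| := abs_nonneg p
  have hzpos : (0:ℝ) ≤ |z| := abs_nonneg z
  have hz3pos : (0:ℝ) ≤ |z|^3 := by positivity
  have hp2b : |p|^2 ≤ 1/100 := by
    have h := mul_le_mul_of_nonneg_right hp (abs_nonneg p)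
    have h2 : |p|^2 = |p| * |p| := sq (|p|)
    linarith [h, h2.le, h2.ge, hp]
  have hcube : (3* |p| * |z|)^3 ≤ (27/100)*(|p| * |z|^3) := by
    have h1 : (3* |p| * |z|)^3 = 27 * |p|^2 * (|p| * |z|^3) := by ring
    rw [h1]
    have h2 := mul_le_mul_of_nonneg_right hp2b
      (mul_nonneg (abs_nonneg p) (pow_nonneg (abs_nonneg z) 3))
    linarith [h2]
  have hu27 : |u|^3 ≤ (27/100)*(|p| * |z|^3) := by
    have h1 : |u|^3 ≤ (3* |p| * |z|)^3 := pow_le_pow_left₀ (abs_nonneg u) hu3 3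
    linarith [hcube]
  have hv27 : |v|^3 ≤ (27/100)*(|p| * |z|^3) := by
    have h1 : |v|^3 ≤ (3* |p| * |z|)^3 := pow_le_pow_left₀ (abs_nonneg v) hv3 3
    linarith [hcube]
  have hA : |(Lu - Lv)/2| ≤ (54/100)*(|p| * |z|^3) := by
    rw [abs_div]
    have : |Lu - Lv| ≤ |Lu| + |Lv| := abs_sub _ _
    have h54 : |Lu| + |Lv| ≤ 2* |u|^3 + 2* |v|^3 := by linarith
    calc |Lu - Lv| / |(2:ℝ)| = |Lu - Lv|/2 := by norm_num
      _ ≤ (2* |u|^3 + 2* |v|^3)/2 := by linarith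
      _ ≤ (54/100)*(|p| * |z|^3) := by linarith
  have hB : |(-(p*a*z))| ≤ |p| * |z|^3 := by
    rw [abs_neg, abs_mul, abs_mul]
    calc |p| * |a| * |z| ≤ |p| * z^2 * |z| := by
          apply mul_le_mul_of_nonneg_right (mul_le_mul_of_nonneg_left haz (abs_nonneg p))
            (abs_nonneg z)
      _ = |p| * |z|^3 := by rw [← sq_abs z]; ring
  have hC : |p*(Es - Et)/2| ≤ 8*(|p| * |z|^3) := by
    rw [abs_div, abs_mul]
    have : |Es - Et| ≤ |Es| + |Et| := abs_sub _ _
    have h16 : |p| * |Es - Et| ≤ |p| * (16* |z|^3) := by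
      apply mul_le_mul_of_nonneg_left _ hppos
      linarith
    calc |p| * |Es - Et| / |(2:ℝ)| = |p| * |Es - Et| / 2 := by norm_num
      _ ≤ |p| * (16* |z|^3) / 2 := by linarith
      _ = 8*(|p| * |z|^3) := by ring
  have hD : |(-((u-v)*(u+v)/4))| ≤ (3/4)*(|p| * |z|^3) := by
    rw [abs_neg, abs_div, abs_mul]
    have h1 : |u - v| * |u + v| ≤ (6* |p| * |z|) * (5* |p| *z^2) := by
      apply mul_le_mul hdiff hsum (abs_nonneg _) (by positivity)
    have h2 : (6* |p| * |z|) * (5* |p| *z^2) = 30 * |p|^2 * (|z| * z^2) := by ring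
    have h3 : |z| * z^2 = |z|^3 := by rw [← sq_abs]; ring
    have h4 : |p|^2 ≤ (1/10)* |p| := by
      have h := mul_le_mul_of_nonneg_right hp (abs_nonneg p)
      calc |p|^2 = |p| * |p| := sq (|p|)
        _ ≤ (1/10)* |p| := h
    calc |u - v| * |u + v| / |(4:ℝ)| = |u - v| * |u + v| / 4 := by norm_num
      _ ≤ 30 * |p|^2 * (|z| * z^2) / 4 := by rw [← h2]; linarith
      _ = 30 * |p|^2 * |z|^3 / 4 := by rw [h3]
      _ ≤ (3/4)*(|p| * |z|^3) := by
          have h5 := mul_le_mul_of_nonneg_right h4 hz3pos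
          linarith [h5]
  rw [hF1, hF2, key]
  have tri : |(Lu - Lv)/2 + (-(p*a*z)) + p*(Es - Et)/2 + (-((u-v)*(u+v)/4))|
      ≤ |(Lu - Lv)/2| + |(-(p*a*z))| + |p*(Es - Et)/2| + |(-((u-v)*(u+v)/4))| := by
    calc |(Lu - Lv)/2 + (-(p*a*z)) + p*(Es - Et)/2 + (-((u-v)*(u+v)/4))|
        ≤ |(Lu - Lv)/2 + (-(p*a*z)) + p*(Es - Et)/2| + |(-((u-v)*(u+v)/4))| := abs_add_le _ _
      _ ≤ |(Lu - Lv)/2 + (-(p*a*z))| + |p*(Es - Et)/2| + |(-((u-v)*(u+v)/4))| := by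
          linarith [abs_add_le ((Lu - Lv)/2 + (-(p*a*z))) (p*(Es - Et)/2)]
      _ ≤ _ := by linarith [abs_add_le ((Lu - Lv)/2) (-(p*a*z))]
  have hfin : (0:ℝ) ≤ |p| * |z|^3 := by positivity
  calc |(Lu - Lv)/2 + (-(p*a*z)) + p*(Es - Et)/2 + (-((u-v)*(u+v)/4))|
      ≤ (54/100)*(|p| * |z|^3) + |p| * |z|^3 + 8*(|p| * |z|^3) + (3/4)*(|p| * |z|^3) := by
        linarith
    _ ≤ 100 * |p| * |z|^3 := by
        have : 100 * |p| * |z|^3 = 100 * (|p| * |z|^3) := by ring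
        linarith [hfin, this.le, this.ge]
end
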